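/- arXiv:2504.08370 — 2 statements merged into one kernel-verified Lean document; each statement's English description precedes it below -/
import Mathlib

section
/- Let (A, R) be a finite SETAF, i.e., A a finite set and R ⊆ (𝒫(A)∖{∅}) × A. A function ℓ : A → {0, ½, 1} is a complete labelling (ℓ(a) = 1 iff every attacker set S of a contains some b with ℓ(b) = 0 or a has no attacker set; ℓ(a) = 0 iff some attacker set S of a has ℓ(b) = 1 for all b ∈ S; ℓ(a) = ½ otherwise) if and only if for every a ∈ A, ℓ(a) = min over attacker sets S of a of (1 − min over b ∈ S of ℓ(b)), with the convention that a min over the empty family equals 1. -/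
open Set Finset

/-- The attacker sets of argument `a` in the SETAF with attack relation `R`. -/
def attackers {A : Type*} [DecidableEq A] (R : Finset (Finset A × A)) (a : A) :
    Finset (Finset A) :=
  (R.filter fun p => p.2 = a).image Prod.fst

section helper

variable {A : Type*} [DecidableEq A] (ℓ : A → ℝ) (hℓ : ∀ a, ℓ a = 0 ∨ ℓ a = 1/2 ∨ ℓ a = 1)

include hℓ in
lemma ℓ_nonneg (a : A) : 0 ≤ ℓ a := by rcases hℓ a with h|h|h <;> rw [h] <;> norm_num

include hℓ in
lemma ℓ_le_one (a : A) : ℓ a ≤ 1 := by rcases hℓ a with h|h|h <;> rw [h] <;> norm_num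

include hℓ in
lemma inner_nonneg (S : Finset A) : 0 ≤ S.fold min 1 ℓ :=
  (Finset.le_fold_min _).2 ⟨zero_le_one, fun b _ => ℓ_nonneg ℓ hℓ b⟩

lemma inner_le_one (S : Finset A) : S.fold min 1 ℓ ≤ 1 :=
  (Finset.fold_min_le _).2 (Or.inl le_rfl)

include hℓ in
lemma inner_eq_one_iff (S : Finset A) : S.fold min 1 ℓ = 1 ↔ ∀ b ∈ S, ℓ b = 1 := by
  constructor
  · intro h b hb
    have := (Finset.le_fold_min _).1 h.ge
    exact le_antisymm (ℓ_le_one ℓ hℓ b) (this.2 b hb)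
  · intro h
    exact le_antisymm (inner_le_one ℓ S)
      ((Finset.le_fold_min _).2 ⟨le_rfl, fun b hb => (h b hb).ge⟩)

include hℓ in
lemma inner_eq_zero_iff (S : Finset A) : S.fold min 1 ℓ = 0 ↔ ∃ b ∈ S, ℓ b = 0 := by
  constructor
  · intro h
    rcases (Finset.fold_min_le _).1 h.le with h1 | ⟨b, hb, hb0⟩
    · norm_num at h1
    · exact ⟨b, hb, le_antisymm hb0 (ℓ_nonneg ℓ hℓ b)⟩
  · rintro ⟨b, hb, hb0⟩
    exact le_antisymm ((Finset.fold_min_le _).2 (Or.inr ⟨b, hb, hb0.le⟩)) (inner_nonneg ℓ hℓ S)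

end helper

/-- For a finite SETAF and a 3-valued function `ℓ : A → {0, 1/2, 1}`,
`ℓ` is a complete labelling iff for every `a`,
`ℓ a = min over attacker sets S of a of (1 - min over b ∈ S of ℓ b)`,
where a min over an empty family is `1`. -/
theorem stmt_9 {A : Type*} [Fintype A] [DecidableEq A]
    (R : Finset (Finset A × A)) (hR : ∀ p ∈ R, p.1.Nonempty)
    (ℓ : A → ℝ) (hℓ : ∀ a, ℓ a = 0 ∨ ℓ a = 1/2 ∨ ℓ a = 1) :
    ((∀ a, (ℓ a = 1 ↔ ∀ S ∈ attackers R a, ∃ b ∈ S, ℓ b = 0) ∧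
           (ℓ a = 0 ↔ ∃ S ∈ attackers R a, ∀ b ∈ S, ℓ b = 1)) ↔
      (∀ a, ℓ a = (attackers R a).fold min 1 (fun S => 1 - S.fold min 1 ℓ))) := by
  set F : Finset A → ℝ := fun S => 1 - S.fold min 1 ℓ with hF
  have hF0 : ∀ S, 0 ≤ F S := fun S => by
    simp only [hF, sub_nonneg]; exact inner_le_one ℓ S
  have hF1 : ∀ S, F S ≤ 1 := fun S => by
    simp only [hF]; linarith [inner_nonneg ℓ hℓ S]
  have outer_le_one : ∀ a, (attackers R a).fold min 1 F ≤ 1 :=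
    fun a => (Finset.fold_min_le _).2 (Or.inl le_rfl)
  have outer_nonneg : ∀ a, 0 ≤ (attackers R a).fold min 1 F :=
    fun a => (Finset.le_fold_min _).2 ⟨zero_le_one, fun S _ => hF0 S⟩
  -- outer = 1 iff every attacker set contains a 0
  have out1 : ∀ a, (attackers R a).fold min 1 F = 1 ↔
      ∀ S ∈ attackers R a, ∃ b ∈ S, ℓ b = 0 := by
    intro a
    constructor
    · intro h S hS
      have := ((Finset.le_fold_min _).1 h.ge).2 S hS
      have hin : S.fold min 1 ℓ ≤ 0 := by simp only [hF] at this; linarith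
      exact (inner_eq_zero_iff ℓ hℓ S).1 (le_antisymm hin (inner_nonneg ℓ hℓ S))
    · intro h
      refine le_antisymm (outer_le_one a) ((Finset.le_fold_min _).2 ⟨le_rfl, fun S hS => ?_⟩)
      have := (inner_eq_zero_iff ℓ hℓ S).2 (h S hS)
      simp [hF, this]
  have out0 : ∀ a, (attackers R a).fold min 1 F = 0 ↔
      ∃ S ∈ attackers R a, ∀ b ∈ S, ℓ b = 1 := by
    intro a
    constructor
    · intro h
      rcases (Finset.fold_min_le _).1 h.le with h1 | ⟨S, hS, hS0⟩
      · norm_num at h1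
      · refine ⟨S, hS, (inner_eq_one_iff ℓ hℓ S).1 ?_⟩
        have := inner_le_one ℓ S
        simp only [hF] at hS0; linarith
    · rintro ⟨S, hS, hS1⟩
      have := (inner_eq_one_iff ℓ hℓ S).2 hS1
      refine le_antisymm ((Finset.fold_min_le _).2 (Or.inr ⟨S, hS, ?_⟩)) (outer_nonneg a)
      simp [hF, this]
  constructor
  · intro h a
    rcases hℓ a with h0 | hhalf | h1
    · rw [h0, eq_comm, out0 a]
      exact ((h a).2).1 h0
    · rw [hhalf]
      have hne1 : ¬ ∀ S ∈ attackers R a, ∃ b ∈ S, ℓ b = 0 := by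
        intro hh
        have := ((h a).1).2 hh
        rw [hhalf] at this; norm_num at this
      have hne0 : ¬ ∃ S ∈ attackers R a, ∀ b ∈ S, ℓ b = 1 := by
        intro hh
        have := ((h a).2).2 hh
        rw [hhalf] at this; norm_num at this
      push_neg at hne1 hne0
      obtain ⟨S, hS, hSb⟩ := hne1
      -- every b in S has ℓ b ≥ 1/2, so inner S ≥ 1/2, F S ≤ 1/2, outer ≤ 1/2
      have hup : (attackers R a).fold min 1 F ≤ 1/2 := by
        refine (Finset.fold_min_le _).2 (Or.inr ⟨S, hS, ?_⟩)
        have : (1:ℝ)/2 ≤ S.fold min 1 ℓ := by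
          refine (Finset.le_fold_min _).2 ⟨by norm_num, fun b hb => ?_⟩
          rcases hℓ b with hb0 | hbh | hb1
          · exact absurd hb0 (hSb b hb)
          · rw [hbh]
          · rw [hb1]; norm_num
        simp only [hF]; linarith
      have hlo : (1:ℝ)/2 ≤ (attackers R a).fold min 1 F := by
        refine (Finset.le_fold_min _).2 ⟨by norm_num, fun T hT => ?_⟩
        obtain ⟨b, hb, hb1⟩ := hne0 T hT
        have : T.fold min 1 ℓ ≤ 1/2 := by
          refine (Finset.fold_min_le _).2 (Or.inr ⟨b, hb, ?_⟩)
          rcases hℓ b with hb0 | hbh | h1'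
          · rw [hb0]; norm_num
          · rw [hbh]
          · exact absurd h1' hb1
        simp only [hF]; linarith
      linarith
    · rw [h1, eq_comm, out1 a]
      exact ((h a).1).1 h1
  · intro h a
    refine ⟨?_, ?_⟩
    · rw [h a]; exact out1 a
    · rw [h a]; exact out0 a
end

section
/- Let (A, R) be a finite SETAF. A function ℓ : A → {0, ½, 1} satisfies the Gödel equational system Eq_G^S (ℓ(a) = min over attacker sets Sᵢ of a of max over b ∈ Sᵢ of (1 − ℓ(b)), with the convention that the outer min over an empty family is 1) if and only if ℓ is a complete labelling of the SETAF. -/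
/-! Both sides of the equivalence only ask whether `ℓ a` is `0`, `1`, or neither. A min of maxes
of values in `[0, 1]` equals `1` (resp. `0`) exactly under the conditions of a complete labelling,
and with values in `{0, ½, 1}` the Gödel operator stays in `{0, ½, 1}`, where a value is
determined by whether it equals `0` and whether it equals `1`. -/

open Set Finset

namespace Finset

variable {α β : Type*} {s : Finset α} {f : α → β} {b c : β}

theorem fold_mem_of_choice {op : β → β → β} [Std.Commutative op] [Std.Associative op]
    (hop : ∀ x y, op x y = x ∨ op x y = y) {T : Set β} (hb : b ∈ T) (hf : ∀ x ∈ s, f x ∈ T) :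
    s.fold op b f ∈ T := by
  classical
  induction s using Finset.induction with
  | empty => exact hb
  | insert x s hx ih =>
    rw [fold_insert hx]
    rcases hop (f x) (s.fold op b f) with h | h <;> rw [h]
    · exact hf x (mem_insert_self x s)
    · exact ih fun y hy => hf y (mem_insert_of_mem hy)

variable [LinearOrder β]

theorem fold_max_eq_iff_exists (hbc : b < c) (hf : ∀ x ∈ s, f x ≤ c) :
    s.fold max b f = c ↔ ∃ x ∈ s, f x = c := by
  rw [le_antisymm_iff, fold_max_le, le_fold_max]
  refine ⟨fun ⟨_, h⟩ => ?_, fun ⟨x, hx, hfx⟩ => ⟨⟨hbc.le, hf⟩, .inr ⟨x, hx, hfx.ge⟩⟩⟩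
  obtain h | ⟨x, hx, hcx⟩ := h
  · exact absurd h hbc.not_ge
  · exact ⟨x, hx, le_antisymm (hf x hx) hcx⟩

theorem fold_max_eq_self_iff (hf : ∀ x ∈ s, b ≤ f x) :
    s.fold max b f = b ↔ ∀ x ∈ s, f x = b := by
  rw [le_antisymm_iff, fold_max_le]
  exact ⟨fun ⟨⟨_, h⟩, _⟩ x hx => le_antisymm (h x hx) (hf x hx),
    fun h => ⟨⟨le_rfl, fun x hx => (h x hx).le⟩, (le_fold_max _).2 (.inl le_rfl)⟩⟩

theorem fold_min_eq_iff_exists (hcb : c < b) (hf : ∀ x ∈ s, c ≤ f x) :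
    s.fold min b f = c ↔ ∃ x ∈ s, f x = c :=
  fold_max_eq_iff_exists (β := βᵒᵈ) hcb hf

theorem fold_min_eq_self_iff (hf : ∀ x ∈ s, f x ≤ b) :
    s.fold min b f = b ↔ ∀ x ∈ s, f x = b :=
  fold_max_eq_self_iff (β := βᵒᵈ) hf

end Finset

section Godel

variable {A : Type*} [DecidableEq A] (R : Finset (Finset A × A)) {ℓ : A → ℝ} {a : A}

/-- The right-hand side of the Gödel equational system `Eq_G^S` at `a`. -/
def godelOp (ℓ : A → ℝ) (a : A) : ℝ :=
  (attackers R a).fold min 1 fun S => S.fold max 0 fun b => 1 - ℓ b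

theorem godelOp_eq_one_iff (hℓ : ∀ b, 0 ≤ ℓ b) :
    godelOp R ℓ a = 1 ↔ ∀ S ∈ attackers R a, ∃ b ∈ S, ℓ b = 0 := by
  have hle : ∀ b, 1 - ℓ b ≤ 1 := fun b => by linarith [hℓ b]
  rw [godelOp, fold_min_eq_self_iff fun S _ => (fold_max_le _).2 ⟨zero_le_one, fun b _ => hle b⟩]
  refine forall₂_congr fun S _ => ?_
  simp only [fold_max_eq_iff_exists zero_lt_one fun b _ => hle b, sub_eq_self]

theorem godelOp_eq_zero_iff (hℓ : ∀ b, ℓ b ≤ 1) :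
    godelOp R ℓ a = 0 ↔ ∃ S ∈ attackers R a, ∀ b ∈ S, ℓ b = 1 := by
  have hle : ∀ b, 0 ≤ 1 - ℓ b := fun b => by linarith [hℓ b]
  rw [godelOp, fold_min_eq_iff_exists zero_lt_one fun S _ => (le_fold_max _).2 (.inl le_rfl)]
  refine exists_congr fun S => and_congr_right fun _ => ?_
  rw [fold_max_eq_self_iff fun b _ => hle b]
  exact forall₂_congr fun b _ => by rw [sub_eq_zero, eq_comm]

theorem godelOp_mem_three (hℓ : ∀ b, ℓ b ∈ ({0, 1/2, 1} : Set ℝ)) :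
    godelOp R ℓ a ∈ ({0, 1/2, 1} : Set ℝ) :=
  fold_mem_of_choice min_choice (by simp) fun S _ =>
    fold_mem_of_choice max_choice (by simp) fun b _ => by
      obtain h | h | h : ℓ b = 0 ∨ ℓ b = 1/2 ∨ ℓ b = 1 := hℓ b <;> norm_num [h]

end Godel

theorem eq_of_mem_three {x y : ℝ} (hx : x ∈ ({0, 1/2, 1} : Set ℝ))
    (hy : y ∈ ({0, 1/2, 1} : Set ℝ)) (h0 : x = 0 ↔ y = 0) (h1 : x = 1 ↔ y = 1) : x = y := by
  rcases hx with rfl | rfl | rfl <;> rcases hy with rfl | rfl | rfl <;> norm_num at *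

theorem stmt_10_general {A : Type*} [DecidableEq A]
    (R : Finset (Finset A × A))
    (ℓ : A → ℝ) (hℓ : ∀ a, ℓ a = 0 ∨ ℓ a = 1/2 ∨ ℓ a = 1) :
    ((∀ a, ℓ a = (attackers R a).fold min 1 (fun S => S.fold max 0 (fun b => 1 - ℓ b))) ↔
      (∀ a, (ℓ a = 1 ↔ ∀ S ∈ attackers R a, ∃ b ∈ S, ℓ b = 0) ∧
            (ℓ a = 0 ↔ ∃ S ∈ attackers R a, ∀ b ∈ S, ℓ b = 1))) := by
  have hℓ0 : ∀ b, 0 ≤ ℓ b := fun b => by rcases hℓ b with h | h | h <;> norm_num [h]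
  have hℓ1 : ∀ b, ℓ b ≤ 1 := fun b => by rcases hℓ b with h | h | h <;> norm_num [h]
  constructor
  · intro hfix a
    rw [hfix a]
    exact ⟨godelOp_eq_one_iff R hℓ0, godelOp_eq_zero_iff R hℓ1⟩
  · intro hcomplete a
    exact eq_of_mem_three (hℓ a) (godelOp_mem_three R hℓ)
      ((hcomplete a).2.trans (godelOp_eq_zero_iff R hℓ1).symm)
      ((hcomplete a).1.trans (godelOp_eq_one_iff R hℓ0).symm)

/-- For a finite SETAF and `ℓ : A → {0, 1/2, 1}`, `ℓ` satisfies the Gödel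
equational system `Eq_G^S` — `ℓ a = min over attacker sets S of (max over b ∈ S of (1 - ℓ b))`,
the min over the empty family being `1` — iff `ℓ` is a complete labelling. -/
theorem stmt_10 {A : Type*} [Fintype A] [DecidableEq A]
    (R : Finset (Finset A × A)) (hR : ∀ p ∈ R, p.1.Nonempty)
    (ℓ : A → ℝ) (hℓ : ∀ a, ℓ a = 0 ∨ ℓ a = 1/2 ∨ ℓ a = 1) :
    ((∀ a, ℓ a = (attackers R a).fold min 1 (fun S => S.fold max 0 (fun b => 1 - ℓ b))) ↔
      (∀ a, (ℓ a = 1 ↔ ∀ S ∈ attackers R a, ∃ b ∈ S, ℓ b = 0) ∧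
            (ℓ a = 0 ↔ ∃ S ∈ attackers R a, ∀ b ∈ S, ℓ b = 1))) :=
  stmt_10_general R ℓ hℓ
end
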